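/- arXiv:2504.15136 — 2 statements merged into one kernel-verified Lean document; each statement's English description precedes it below -/
import Mathlib

section
/- Let p ∈ (1,2) and set c(p) = p(p−1)/2. For all real numbers y and u with max(|y|, |y+u|) ≠ 0, one has |y+u|^p − |y|^p − p·|y|^{p−1}·sgn(y)·u ≥ c(p)·u²·(max(|y|², |y+u|²))^{(p−2)/2}. -/
/-!
On `[-M, M]` the second derivative `p (p - 1) |x| ^ (p - 2)` of `|x| ^ p` is at least
`c = p (p - 1) M ^ (p - 2)` (as `p ≤ 2`), so `|x| ^ p` is `c`-strongly convex there, and the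
bound is the tangent-line inequality of a strongly convex function at `y` with
`M = max |y| |y + u|`. The singular point `0` is harmless: the derivative
`p |x| ^ (p - 1) sgn x - c x` of `|x| ^ p - c x ^ 2 / 2` is odd, so it suffices to show it is
monotone on `[0, M]`, where it is `p r ^ (p - 1) - c r`.
-/

open Set

lemma Real.abs_rpow_sub_one_mul_sign (x p : ℝ) :
    |x| ^ (p - 1) * Real.sign x = |x| ^ (p - 2) * x := by
  have hp : p - 1 = p - 2 + 1 := by ring
  rcases lt_trichotomy x 0 with hx | rfl | hx
  · rw [Real.sign_of_neg hx, hp, Real.rpow_add_one (abs_pos.2 hx.ne).ne', abs_of_neg hx]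
    ring
  · simp
  · rw [Real.sign_of_pos hx, hp, abs_of_pos hx, Real.rpow_add_one hx.ne', mul_one]

lemma Real.hasDerivAt_abs_rpow_sign (x : ℝ) {p : ℝ} (hp : 1 < p) :
    HasDerivAt (fun x : ℝ => |x| ^ p) (p * |x| ^ (p - 1) * Real.sign x) x := by
  simpa only [mul_assoc, Real.abs_rpow_sub_one_mul_sign] using hasDerivAt_abs_rpow x hp

theorem Function.Odd.monotoneOn_Icc_neg {α β : Type*} [AddCommGroup α] [LinearOrder α]
    [IsOrderedAddMonoid α] [AddCommGroup β] [PartialOrder β] [IsOrderedAddMonoid β]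
    {f : α → β} {M : α} (hf : f.Odd) (hmono : MonotoneOn f (Icc 0 M)) :
    MonotoneOn f (Icc (-M) M) := by
  have hneg : MonotoneOn f (Icc (-M) 0) := by
    intro a ha b hb hab
    have := hmono ⟨neg_nonneg.2 hb.2, neg_le.1 hb.1⟩ ⟨neg_nonneg.2 ha.2, neg_le.1 ha.1⟩
      (neg_le_neg hab)
    rwa [hf, hf, neg_le_neg_iff] at this
  intro a ha b hb hab
  rcases le_total 0 a with h0a | ha0
  · exact hmono ⟨h0a, ha.2⟩ ⟨h0a.trans hab, hb.2⟩ hab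
  rcases le_total b 0 with hb0 | h0b
  · exact hneg ⟨ha.1, ha0⟩ ⟨hb.1, hb0⟩ hab
  have hM : 0 ≤ M := h0b.trans hb.2
  exact (hneg ⟨ha.1, ha0⟩ ⟨neg_nonpos.2 hM, le_rfl⟩ ha0).trans
    (hmono ⟨le_rfl, hM⟩ ⟨h0b, hb.2⟩ h0b)

lemma ConvexOn.add_mul_sub_le_of_hasDerivAt {S : Set ℝ} {f : ℝ → ℝ} {x y f' : ℝ}
    (hf : ConvexOn ℝ S f) (hx : x ∈ S) (hy : y ∈ S) (hf' : HasDerivAt f f' x) :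
    f x + f' * (y - x) ≤ f y := by
  rcases lt_trichotomy x y with hxy | rfl | hxy
  · have := hf.le_slope_of_hasDerivAt hx hy hxy hf'
    rw [slope_def_field, le_div_iff₀ (sub_pos.2 hxy)] at this
    linarith
  · simp
  · have := hf.slope_le_of_hasDerivAt hy hx hxy hf'
    rw [slope_def_field, div_le_iff₀ (sub_pos.2 hxy)] at this
    linarith

lemma StrongConvexOn.add_mul_sub_add_le_of_hasDerivAt {S : Set ℝ} {m : ℝ} {f : ℝ → ℝ}
    {x y f' : ℝ} (hf : StrongConvexOn S m f) (hx : x ∈ S) (hy : y ∈ S)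
    (hf' : HasDerivAt f f' x) :
    f x + f' * (y - x) + m / 2 * (y - x) ^ 2 ≤ f y := by
  have hconv := strongConvexOn_iff_convex.1 hf
  simp only [Real.norm_eq_abs, sq_abs] at hconv
  have := hconv.add_mul_sub_le_of_hasDerivAt hx hy
    (hf'.sub ((hasDerivAt_pow 2 x).const_mul (m / 2)))
  linear_combination this

lemma monotoneOn_mul_rpow_sub_one_sub_mul {p : ℝ} (hp1 : 1 ≤ p) (hp2 : p ≤ 2) (M : ℝ) :
    MonotoneOn (fun r : ℝ => p * r ^ (p - 1) - p * (p - 1) * M ^ (p - 2) * r) (Icc 0 M) := by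
  refine monotoneOn_of_hasDerivWithinAt_nonneg (convex_Icc 0 M)
    (f' := fun r => p * (p - 1) * r ^ (p - 2) - p * (p - 1) * M ^ (p - 2))
    (by fun_prop (disch := linarith)) (fun r hr => ?_) (fun r hr => ?_) <;>
    rw [interior_Icc] at hr
  · have := ((Real.hasDerivAt_rpow_const (p := p - 1) (Or.inl hr.1.ne')).const_mul p).sub
      ((hasDerivAt_id r).const_mul (p * (p - 1) * M ^ (p - 2)))
    refine (this.congr_deriv ?_).hasDerivWithinAt
    rw [show p - 1 - 1 = p - 2 by ring]
    ring
  · rw [sub_nonneg]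
    exact mul_le_mul_of_nonneg_left (Real.rpow_le_rpow_of_nonpos hr.1 hr.2.le (by linarith))
      (mul_nonneg (by linarith) (by linarith))

theorem strongConvexOn_abs_rpow {p : ℝ} (hp1 : 1 < p) (hp2 : p ≤ 2) (M : ℝ) :
    StrongConvexOn (Icc (-M) M) (p * (p - 1) * M ^ (p - 2)) (fun x : ℝ => |x| ^ p) := by
  set c := p * (p - 1) * M ^ (p - 2)
  set g' : ℝ → ℝ := fun x => p * |x| ^ (p - 1) * Real.sign x - c * x
  have hderiv : ∀ x, HasDerivAt (fun x : ℝ => |x| ^ p - c / 2 * x ^ 2) (g' x) x := fun x =>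
    ((Real.hasDerivAt_abs_rpow_sign x hp1).sub ((hasDerivAt_pow 2 x).const_mul (c / 2))).congr_deriv
      (by simp only [g']; ring)
  have hodd : g'.Odd := fun x => by
    dsimp only [g']
    rw [abs_neg, Real.sign_neg]
    ring
  have hmono : MonotoneOn g' (Icc 0 M) := by
    refine (monotoneOn_mul_rpow_sub_one_sub_mul hp1.le hp2 M).congr fun r hr => ?_
    rcases hr.1.eq_or_lt with rfl | hr0
    · simp [g', Real.zero_rpow (by linarith : p - 1 ≠ 0)]
    · simp [g', abs_of_pos hr0, Real.sign_of_pos hr0, c]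
  rw [strongConvexOn_iff_convex]
  simp only [Real.norm_eq_abs, sq_abs]
  have hderiv_eq : deriv (fun x : ℝ => |x| ^ p - c / 2 * x ^ 2) = g' :=
    funext fun x => (hderiv x).deriv
  refine MonotoneOn.convexOn_of_deriv (convex_Icc _ _)
    (fun x _ => (hderiv x).continuousAt.continuousWithinAt)
    (fun x _ => (hderiv x).differentiableAt.differentiableWithinAt) ?_
  rw [hderiv_eq]
  exact (hodd.monotoneOn_Icc_neg hmono).mono interior_subset

theorem second_order_remainder_lower_bound_general (p : ℝ) (hp1 : 1 < p) (hp2 : p < 2) (y u : ℝ) :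
    p * (p - 1) / 2 * u ^ 2 * (max (y ^ 2) ((y + u) ^ 2)) ^ ((p - 2) / 2)
      ≤ |y + u| ^ p - |y| ^ p - p * |y| ^ (p - 1) * Real.sign y * u := by
  set M := max |y| |y + u|
  have hM : (max (y ^ 2) ((y + u) ^ 2)) ^ ((p - 2) / 2) = M ^ (p - 2) := by
    rw [Real.rpow_div_two_eq_sqrt _ (by positivity), Real.sqrt_monotone.map_max,
      Real.sqrt_sq_eq_abs, Real.sqrt_sq_eq_abs]
  have hy : y ∈ Icc (-M) M := abs_le.1 (le_max_left _ _)
  have hyu : y + u ∈ Icc (-M) M := abs_le.1 (le_max_right _ _)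
  have key := (strongConvexOn_abs_rpow hp1 hp2.le M).add_mul_sub_add_le_of_hasDerivAt hy hyu
    (Real.hasDerivAt_abs_rpow_sign y hp1)
  rw [add_sub_cancel_left] at key
  rw [hM]
  linear_combination key

/-- Pointwise convexity inequality for `x ↦ |x|^p` with `p ∈ (1,2)`: for all `y, u ∈ ℝ` with
`max(|y|,|y+u|) ≠ 0`,
`|y+u|^p − |y|^p − p |y|^(p−1) sgn(y) u ≥ (p(p−1)/2) u² (max(|y|²,|y+u|²))^((p−2)/2)`. -/
theorem second_order_remainder_lower_bound (p : ℝ) (hp1 : 1 < p) (hp2 : p < 2) (y u : ℝ)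
    (h : max |y| |y + u| ≠ 0) :
    p * (p - 1) / 2 * u ^ 2 * (max (y ^ 2) ((y + u) ^ 2)) ^ ((p - 2) / 2)
      ≤ |y + u| ^ p - |y| ^ p - p * |y| ^ (p - 1) * Real.sign y * u :=
  second_order_remainder_lower_bound_general p hp1 hp2 y u
end

section
/- Let p ∈ (1,2), β ≥ 0, T > 0. Let A : [0,T] → [0,∞) be a measurable nondecreasing function, Y : [0,T] → ℝ and Z : [0,T] → ℝ^d measurable. Then (∫₀ᵀ e^{βA_s}|Z_s|² 1_{{Y_s ≠ 0}} ds)^{p/2} ≤ ((2−p)/2)·sup_{t∈[0,T]} e^{(p/2)βA_t}|Y_t|^p + (p/2)·∫₀ᵀ e^{(p/2)βA_s}|Y_s|^{p−2}|Z_s|² 1_{{Y_s ≠ 0}} ds, where the supremum is taken in [0,∞] and the inequality is understood in the extended reals. -/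
open MeasureTheory Set ENNReal

/-! On `{Y ≠ 0}` the integrand factors as
`e^{βA}|Z|² = (e^{(p/2)βA}|Y|^p)^{(2-p)/p} · e^{(p/2)βA}|Y|^{p-2}|Z|²`.
Bounding the first factor by the supremum `S` and integrating gives `I ≤ S^{(2-p)/p} J`;
raising this to the power `p/2` yields `I^{p/2} ≤ S^{(2-p)/2} J^{p/2}`, and the weighted AM-GM
inequality with weights `(2-p)/2` and `p/2` concludes. -/

theorem ENNReal.geom_mean_le_arith_mean2_weighted {w₁ w₂ : ℝ} (hw₁ : 0 < w₁) (hw₂ : 0 < w₂)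
    (hw : w₁ + w₂ = 1) (x y : ℝ≥0∞) :
    x ^ w₁ * y ^ w₂ ≤ ENNReal.ofReal w₁ * x + ENNReal.ofReal w₂ * y := by
  have hconj : w₁⁻¹.HolderConjugate w₂⁻¹ := .inv_inv hw₁ hw₂ hw
  refine (ENNReal.young_inequality _ _ hconj).trans_eq ?_
  rw [← ENNReal.rpow_mul, ← ENNReal.rpow_mul, mul_inv_cancel₀ hw₁.ne', mul_inv_cancel₀ hw₂.ne',
    ENNReal.rpow_one, ENNReal.rpow_one, ENNReal.div_eq_inv_mul, ENNReal.div_eq_inv_mul,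
    ← ENNReal.ofReal_inv_of_pos (inv_pos.2 hw₁), ← ENNReal.ofReal_inv_of_pos (inv_pos.2 hw₂),
    inv_inv, inv_inv]

theorem ENNReal.rpow_half_le_of_le_rpow_mul {p : ℝ} (hp0 : 0 < p) (hp2 : p < 2)
    {I S J : ℝ≥0∞} (h : I ≤ S ^ ((2 - p) / p) * J) :
    I ^ (p / 2) ≤ ENNReal.ofReal ((2 - p) / 2) * S + ENNReal.ofReal (p / 2) * J := by
  calc I ^ (p / 2) ≤ (S ^ ((2 - p) / p) * J) ^ (p / 2) := by gcongr
    _ = S ^ ((2 - p) / 2) * J ^ (p / 2) := by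
      rw [ENNReal.mul_rpow_of_nonneg _ _ (by positivity), ← ENNReal.rpow_mul]
      congr 2
      field_simp
    _ ≤ _ := ENNReal.geom_mean_le_arith_mean2_weighted (by linarith) (by linarith) (by ring) _ _

theorem Real.exp_mul_eq_rpow_mul_rpow {p : ℝ} (hp : p ≠ 0) {y : ℝ} (hy : y ≠ 0) (β a w : ℝ) :
    Real.exp (β * a) * w
      = (Real.exp (p / 2 * β * a) * |y| ^ p) ^ ((2 - p) / p) *
          (Real.exp (p / 2 * β * a) * |y| ^ (p - 2) * w) := by
  have hy' : 0 < |y| := abs_pos.mpr hy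
  rw [Real.mul_rpow (Real.exp_nonneg _) (Real.rpow_nonneg hy'.le _), ← Real.exp_mul,
    ← Real.rpow_mul hy'.le]
  calc Real.exp (β * a) * w
      = Real.exp (p / 2 * β * a * ((2 - p) / p) + p / 2 * β * a) *
          |y| ^ (p * ((2 - p) / p) + (p - 2)) * w := by
        rw [show p * ((2 - p) / p) + (p - 2) = 0 by field_simp; ring, Real.rpow_zero, mul_one,
          show p / 2 * β * a * ((2 - p) / p) + p / 2 * β * a = β * a by field_simp; ring]
    _ = _ := by rw [Real.exp_add, Real.rpow_add hy']; ring

theorem ENNReal.ofReal_exp_mul_ite_le {p : ℝ} (hp0 : 0 < p) (hp2 : p ≤ 2) {S : ℝ≥0∞}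
    {β a y : ℝ} (hS : ENNReal.ofReal (Real.exp (p / 2 * β * a) * |y| ^ p) ≤ S) (w : ℝ) :
    ENNReal.ofReal (Real.exp (β * a) * w * (if y ≠ 0 then 1 else 0))
      ≤ S ^ ((2 - p) / p) *
          ENNReal.ofReal (Real.exp (p / 2 * β * a) * |y| ^ (p - 2) * w *
            (if y ≠ 0 then 1 else 0)) := by
  by_cases hy : y = 0
  · simp [hy]
  rw [if_pos hy, mul_one, mul_one, Real.exp_mul_eq_rpow_mul_rpow hp0.ne' hy,
    ENNReal.ofReal_mul (by positivity),
    ← ENNReal.ofReal_rpow_of_nonneg (by positivity) (div_nonneg (by linarith) hp0.le)]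
  gcongr

theorem quadratic_variation_estimate_general (p β T : ℝ) (hp1 : 1 < p) (hp2 : p < 2)
    (d : ℕ) (A Y : ℝ → ℝ) (Z : ℝ → EuclideanSpace ℝ (Fin d)) :
    (∫⁻ s in Icc (0 : ℝ) T,
        ENNReal.ofReal (Real.exp (β * A s) * ‖Z s‖ ^ 2 * (if Y s ≠ 0 then 1 else 0))) ^ (p / 2)
      ≤ ENNReal.ofReal ((2 - p) / 2) *
          (⨆ t ∈ Icc (0 : ℝ) T, ENNReal.ofReal (Real.exp (p / 2 * β * A t) * |Y t| ^ p))
        + ENNReal.ofReal (p / 2) *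
          ∫⁻ s in Icc (0 : ℝ) T,
            ENNReal.ofReal (Real.exp (p / 2 * β * A s) * |Y s| ^ (p - 2) * ‖Z s‖ ^ 2 *
              (if Y s ≠ 0 then 1 else 0)) := by
  have hp0 : 0 < p := by linarith
  set S := ⨆ t ∈ Icc (0 : ℝ) T, ENNReal.ofReal (Real.exp (p / 2 * β * A t) * |Y t| ^ p)
  obtain hS | hS := eq_or_ne S ⊤
  · rw [hS, ENNReal.mul_top (by simpa using hp2), top_add]
    exact le_top
  refine ENNReal.rpow_half_le_of_le_rpow_mul hp0 hp2 ?_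
  rw [← lintegral_const_mul' _ _ (ENNReal.rpow_ne_top_of_nonneg (by bound) hS)]
  refine setLIntegral_mono' measurableSet_Icc fun s hs ↦ ?_
  exact ENNReal.ofReal_exp_mul_ite_le hp0 hp2.le
    (le_biSup (fun t ↦ ENNReal.ofReal (Real.exp (p / 2 * β * A t) * |Y t| ^ p)) hs) _

/-- Pathwise estimate for the `p/2`-th power of the weighted quadratic variation of the
Brownian component: for `p ∈ (1,2)`, `β ≥ 0`, `T > 0`, `A : [0,T] → [0,∞)` measurable
nondecreasing, `Y : [0,T] → ℝ`, `Z : [0,T] → ℝ^d` measurable,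
`(∫₀ᵀ e^{βA_s}|Z_s|² 1_{Y_s ≠ 0} ds)^{p/2}
  ≤ ((2−p)/2)·sup_{t∈[0,T]} e^{(p/2)βA_t}|Y_t|^p
    + (p/2)·∫₀ᵀ e^{(p/2)βA_s}|Y_s|^{p−2}|Z_s|² 1_{Y_s ≠ 0} ds`,
understood in the extended reals. -/
theorem quadratic_variation_estimate (p β T : ℝ) (hp1 : 1 < p) (hp2 : p < 2)
    (hβ : 0 ≤ β) (hT : 0 < T) (d : ℕ) (A Y : ℝ → ℝ) (Z : ℝ → EuclideanSpace ℝ (Fin d))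
    (hA : Measurable A) (hA0 : ∀ s ∈ Icc (0 : ℝ) T, 0 ≤ A s)
    (hAmono : MonotoneOn A (Icc (0 : ℝ) T))
    (hY : Measurable Y) (hZ : Measurable Z) :
    (∫⁻ s in Icc (0 : ℝ) T,
        ENNReal.ofReal (Real.exp (β * A s) * ‖Z s‖ ^ 2 * (if Y s ≠ 0 then 1 else 0))) ^ (p / 2)
      ≤ ENNReal.ofReal ((2 - p) / 2) *
          (⨆ t ∈ Icc (0 : ℝ) T, ENNReal.ofReal (Real.exp (p / 2 * β * A t) * |Y t| ^ p))
        + ENNReal.ofReal (p / 2) *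
          ∫⁻ s in Icc (0 : ℝ) T,
            ENNReal.ofReal (Real.exp (p / 2 * β * A s) * |Y s| ^ (p - 2) * ‖Z s‖ ^ 2 *
              (if Y s ≠ 0 then 1 else 0)) :=
  quadratic_variation_estimate_general p β T hp1 hp2 d A Y Z
end
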